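/- Let X₀ have smooth, strictly positive density p_X on ℝ^n, fix ᾱ ∈ (0,1), and let X_t = √ᾱ·X₀ + √(1−ᾱ)·ε with ε ~ N(0, I) independent of X₀; denote by p_t the density of X_t. Assume there exists r > 0 such that the conditional law of X₀ given X_t = x_t is Gaussian: p_{X₀|X_t}(x₀|x_t) = N(x₀; E[X₀|X_t = x_t], r²·I) for all x_t. Then the score of the prior satisfies ∇_x log p_X(x) = ((1−ᾱ)/(r²·√ᾱ)) · E_{x_t ~ N(√ᾱ·x, (1−ᾱ)·I)}[∇_{x_t} log p_t(x_t)] for every x, provided differentiation under the integral sign is valid. -/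

import Mathlib

open MeasureTheory Set Real

/-- The Gaussian density on `ℝⁿ` with mean `m` and covariance `v·I`. -/
noncomputable def gaussPdf {n : ℕ} (m : EuclideanSpace ℝ (Fin n)) (v : ℝ)
    (x : EuclideanSpace ℝ (Fin n)) : ℝ :=
  (2 * π * v) ^ (-(n : ℝ) / 2) * Real.exp (-‖x - m‖ ^ 2 / (2 * v))

namespace PriorScoreAux

open scoped RealInnerProductSpace

variable {n : ℕ}

lemma two_pi_v_pos {v : ℝ} (hv : 0 < v) : 0 < 2 * π * v := by positivity

lemma gaussPdf_pos {v : ℝ} (hv : 0 < v) (m x : EuclideanSpace ℝ (Fin n)) :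
    0 < gaussPdf m v x := by
  unfold gaussPdf
  have := two_pi_v_pos hv
  positivity

lemma log_gaussPdf {v : ℝ} (hv : 0 < v) (m x : EuclideanSpace ℝ (Fin n)) :
    Real.log (gaussPdf m v x) =
      (-(n : ℝ) / 2) * Real.log (2 * π * v) - ‖x - m‖ ^ 2 / (2 * v) := by
  unfold gaussPdf
  rw [Real.log_mul (by positivity : ((2 * π * v) ^ (-(n:ℝ)/2) : ℝ) ≠ 0) (Real.exp_ne_zero _),
    Real.log_rpow (two_pi_v_pos hv), Real.log_exp]
  ring

lemma integrable_rexp_neg_mul_sq_norm {b : ℝ} (hb : 0 < b) :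
    Integrable (fun v : EuclideanSpace ℝ (Fin n) => rexp (-b * ‖v‖ ^ 2)) := by
  have := (GaussianFourier.integrable_cexp_neg_mul_sq_norm_add
    (show (0:ℝ) < ((b:ℂ)).re by simpa using hb) 0 (0 : EuclideanSpace ℝ (Fin n))).norm
  simpa [Complex.norm_exp, ← Complex.ofReal_pow] using this

lemma gaussPdf_eq_exp {v : ℝ} (m x : EuclideanSpace ℝ (Fin n)) :
    gaussPdf m v x = (2 * π * v) ^ (-(n : ℝ) / 2) * rexp (-(1/(2*v)) * ‖x - m‖ ^ 2) := by
  unfold gaussPdf; ring_nf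

lemma integrable_gaussPdf {v : ℝ} (hv : 0 < v) (m : EuclideanSpace ℝ (Fin n)) :
    Integrable (fun x => gaussPdf m v x) := by
  have h : Integrable (fun x : EuclideanSpace ℝ (Fin n) =>
      (2 * π * v) ^ (-(n : ℝ) / 2) * rexp (-(1/(2*v)) * ‖x‖ ^ 2)) :=
    (integrable_rexp_neg_mul_sq_norm (by positivity)).const_mul _
  have h2 := h.comp_sub_right m
  refine h2.congr (Filter.Eventually.of_forall fun x => ?_)
  simp only []
  rw [gaussPdf_eq_exp]

lemma integral_gaussPdf {v : ℝ} (hv : 0 < v) (m : EuclideanSpace ℝ (Fin n)) :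
    ∫ x, gaussPdf m v x = 1 := by
  have htrans : ∫ x, gaussPdf m v x = ∫ x, gaussPdf m v (x + m) :=
    (integral_add_right_eq_self (fun x => gaussPdf m v x) m).symm
  rw [htrans]
  have heq : ∀ x : EuclideanSpace ℝ (Fin n), gaussPdf m v (x + m)
      = (2 * π * v) ^ (-(n : ℝ) / 2) * rexp (-(1/(2*v)) * ‖x‖ ^ 2) := by
    intro x; rw [gaussPdf_eq_exp]; simp
  simp_rw [heq]
  rw [integral_const_mul, GaussianFourier.integral_rexp_neg_mul_sq_norm (by positivity),
    finrank_euclideanSpace_fin]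
  rw [show π / (1/(2*v)) = 2 * π * v by field_simp]
  rw [← Real.rpow_add (two_pi_v_pos hv)]
  rw [show (-(n:ℝ)/2 + (n:ℝ)/2) = 0 by ring, Real.rpow_zero]

lemma mul_exp_bound {a : ℝ} (ha : 0 < a) (t : ℝ) :
    t * rexp (-a * t ^ 2) ≤ 1 / (2 * Real.sqrt a) := by
  have hs : 0 < Real.sqrt a := Real.sqrt_pos.mpr ha
  have h1 : 2 * Real.sqrt a * t ≤ rexp (a * t ^ 2) := by
    have h2 : a * t ^ 2 + 1 ≤ rexp (a * t ^ 2) := by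
      have := Real.add_one_le_exp (a * t ^ 2); linarith
    nlinarith [sq_nonneg (1 - Real.sqrt a * t), Real.sq_sqrt ha.le]
  have h3 : rexp (-a * t ^ 2) = (rexp (a * t ^ 2))⁻¹ := by
    rw [← Real.exp_neg]; ring_nf
  rw [h3]
  have hepos : 0 < rexp (a * t ^ 2) := Real.exp_pos _
  rw [← div_eq_mul_inv, div_le_div_iff₀ hepos (by positivity)]
  nlinarith

lemma integrable_rexp_neg_mul_sq_norm_smul {b : ℝ} (hb : 0 < b) :
    Integrable (fun z : EuclideanSpace ℝ (Fin n) => rexp (-b * ‖z‖ ^ 2) • z) := by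
  have hb2 : 0 < b / 2 := by positivity
  have hg : Integrable (fun z : EuclideanSpace ℝ (Fin n) =>
      (1 / (2 * Real.sqrt (b/2))) * rexp (-(b/2) * ‖z‖ ^ 2)) :=
    (integrable_rexp_neg_mul_sq_norm hb2).const_mul _
  refine hg.mono' ?_ ?_
  · exact ((Real.continuous_exp.comp (by continuity)).smul continuous_id).aestronglyMeasurable
  · refine Filter.Eventually.of_forall fun z => ?_
    have h1 : ‖rexp (-b * ‖z‖ ^ 2) • z‖ = rexp (-b * ‖z‖ ^ 2) * ‖z‖ := by
      rw [norm_smul, Real.norm_eq_abs, abs_of_pos (Real.exp_pos _)]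
    rw [h1]
    have h2 : rexp (-b * ‖z‖ ^ 2) = rexp (-(b/2) * ‖z‖ ^ 2) * rexp (-(b/2) * ‖z‖ ^ 2) := by
      rw [← Real.exp_add]; ring_nf
    rw [h2]
    have h3 : ‖z‖ * rexp (-(b/2) * ‖z‖ ^ 2) ≤ 1 / (2 * Real.sqrt (b/2)) :=
      mul_exp_bound hb2 ‖z‖
    have h4 : (0:ℝ) < rexp (-(b/2) * ‖z‖ ^ 2) := Real.exp_pos _
    calc rexp (-(b/2) * ‖z‖ ^ 2) * rexp (-(b/2) * ‖z‖ ^ 2) * ‖z‖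
        = (‖z‖ * rexp (-(b/2) * ‖z‖ ^ 2)) * rexp (-(b/2) * ‖z‖ ^ 2) := by ring
      _ ≤ (1 / (2 * Real.sqrt (b/2))) * rexp (-(b/2) * ‖z‖ ^ 2) :=
          mul_le_mul_of_nonneg_right h3 h4.le

lemma integral_rexp_neg_mul_sq_norm_smul {b : ℝ} :
    ∫ z : EuclideanSpace ℝ (Fin n), rexp (-b * ‖z‖ ^ 2) • z = 0 := by
  have h := integral_neg_eq_self
    (fun z : EuclideanSpace ℝ (Fin n) => rexp (-b * ‖z‖ ^ 2) • z) volume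
  simp only [norm_neg, smul_neg] at h
  rw [integral_neg] at h
  have h2 : (2:ℝ) • (∫ z : EuclideanSpace ℝ (Fin n), rexp (-b * ‖z‖ ^ 2) • z) = 0 := by
    rw [two_smul]; nth_rewrite 1 [← h]; exact neg_add_cancel _
  exact (smul_eq_zero.mp h2).resolve_left two_ne_zero

lemma integrable_gaussPdf_smul {v : ℝ} (hv : 0 < v) (m : EuclideanSpace ℝ (Fin n)) :
    Integrable (fun x => gaussPdf m v x • x) := by
  have hb : 0 < 1/(2*v) := by positivity
  set C : ℝ := (2 * π * v) ^ (-(n : ℝ) / 2) with hC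
  have h : Integrable (fun z : EuclideanSpace ℝ (Fin n) =>
      (C * rexp (-(1/(2*v)) * ‖z‖ ^ 2)) • (z + m)) := by
    have h1 : Integrable (fun z : EuclideanSpace ℝ (Fin n) =>
        C • (rexp (-(1/(2*v)) * ‖z‖ ^ 2) • z)) :=
      (integrable_rexp_neg_mul_sq_norm_smul hb).smul C
    have h2 : Integrable (fun z : EuclideanSpace ℝ (Fin n) =>
        (C * rexp (-(1/(2*v)) * ‖z‖ ^ 2)) • m) :=
      ((integrable_rexp_neg_mul_sq_norm hb).const_mul C).smul_const m
    refine (h1.add h2).congr (Filter.Eventually.of_forall fun z => ?_)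
    simp [smul_add, smul_smul]
  have h3 := h.comp_sub_right m
  refine h3.congr (Filter.Eventually.of_forall fun x => ?_)
  simp only [sub_add_cancel]
  rw [gaussPdf_eq_exp]

lemma integral_gaussPdf_smul {v : ℝ} (hv : 0 < v) (m : EuclideanSpace ℝ (Fin n)) :
    ∫ x, gaussPdf m v x • x = m := by
  have hb : 0 < 1/(2*v) := by positivity
  set C : ℝ := (2 * π * v) ^ (-(n : ℝ) / 2) with hC
  have htrans : ∫ x, gaussPdf m v x • x
      = ∫ z, gaussPdf m v (z + m) • (z + m) :=
    (integral_add_right_eq_self (fun x => gaussPdf m v x • x) m).symm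
  rw [htrans]
  have heq : ∀ z : EuclideanSpace ℝ (Fin n), gaussPdf m v (z + m) • (z + m)
      = C • (rexp (-(1/(2*v)) * ‖z‖ ^ 2) • z) + (gaussPdf m v (z+m)) • m := by
    intro z
    have hz : gaussPdf m v (z + m) = C * rexp (-(1/(2*v)) * ‖z‖ ^ 2) := by
      rw [gaussPdf_eq_exp]; simp; rfl
    rw [hz, smul_add, smul_smul]
  simp_rw [heq]
  have hI1 : Integrable (fun z : EuclideanSpace ℝ (Fin n) =>
      C • (rexp (-(1/(2*v)) * ‖z‖ ^ 2) • z)) := by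
    exact (integrable_rexp_neg_mul_sq_norm_smul (n := n) hb).smul C
  rw [integral_add hI1 (((integrable_gaussPdf hv m).comp_add_right m).smul_const m)]
  rw [integral_smul, integral_rexp_neg_mul_sq_norm_smul, smul_zero, zero_add,
    integral_smul_const]
  rw [integral_add_right_eq_self (fun x => gaussPdf m v x) m, integral_gaussPdf hv, one_smul]

lemma hasGradientAt_sq_affine (q x : EuclideanSpace ℝ (Fin n)) (c : ℝ) :
    HasGradientAt (fun y : EuclideanSpace ℝ (Fin n) => ‖c • y - q‖ ^ 2)
      ((2 * c) • (c • x - q)) x := by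
  have h1 : HasFDerivAt (fun y : EuclideanSpace ℝ (Fin n) => c • y - q)
      (c • ContinuousLinearMap.id ℝ (EuclideanSpace ℝ (Fin n))) x :=
    ((hasFDerivAt_id x).const_smul c).sub_const q
  have h2 := h1.inner ℝ h1
  rw [hasGradientAt_iff_hasFDerivAt]
  have hfun : (fun y : EuclideanSpace ℝ (Fin n) => ‖c • y - q‖ ^ 2)
      = fun y => ⟪c • y - q, c • y - q⟫ := by
    funext y; rw [real_inner_self_eq_norm_sq]
  rw [hfun]
  refine h2.congr_fderiv ?_
  ext h
  simp only [InnerProductSpace.toDual_apply_apply, ContinuousLinearMap.coe_comp',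
    Function.comp_apply, ContinuousLinearMap.prod_apply, ContinuousLinearMap.coe_smul',
    Pi.smul_apply, ContinuousLinearMap.coe_id', id_eq, fderivInnerCLM_apply]
  rw [real_inner_smul_left, real_inner_smul_right, real_inner_smul_left,
    real_inner_comm h (c • x - q)]
  ring

lemma hasGradientAt_combo {f g : EuclideanSpace ℝ (Fin n) → ℝ}
    {gf gg : EuclideanSpace ℝ (Fin n)} {x : EuclideanSpace ℝ (Fin n)} (C a1 a2 : ℝ)
    (hf : HasGradientAt f gf x) (hg : HasGradientAt g gg x) :
    HasGradientAt (fun y => C + a1 * f y + a2 * g y) (a1 • gf + a2 • gg) x := by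
  rw [hasGradientAt_iff_hasFDerivAt]
  have h := ((hf.hasFDerivAt.const_mul a1).add (hg.hasFDerivAt.const_mul a2)).const_add C
  have hfun : (fun y => C + a1 * f y + a2 * g y)
      = fun y => C + (a1 * f y + a2 * g y) := by funext y; ring
  rw [hfun]
  refine h.congr_fderiv ?_
  ext v
  simp [InnerProductSpace.toDual_apply_apply, inner_add_left, real_inner_smul_left]

lemma hasGradientAt_comb (C a1 a2 k : ℝ) (p q x : EuclideanSpace ℝ (Fin n)) :
    HasGradientAt (fun y : EuclideanSpace ℝ (Fin n) =>
        C + a1 * ‖y - p‖ ^ 2 + a2 * ‖k • y - q‖ ^ 2)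
      ((a1 * 2) • (x - p) + (a2 * (2 * k)) • (k • x - q)) x := by
  have g1 : HasGradientAt (fun y : EuclideanSpace ℝ (Fin n) => ‖y - p‖ ^ 2)
      ((2 * (1:ℝ)) • ((1:ℝ) • x - p)) x := by
    have := hasGradientAt_sq_affine p x 1
    simpa using (by simpa using this : HasGradientAt
      (fun y : EuclideanSpace ℝ (Fin n) => ‖(1:ℝ) • y - p‖ ^ 2) ((2 * (1:ℝ)) • ((1:ℝ) • x - p)) x)
  have g2 := hasGradientAt_sq_affine q x k
  have h := hasGradientAt_combo C a1 a2 g1 g2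
  convert h using 1
  simp [smul_smul]

lemma hasGradientAt_log_comp {f : EuclideanSpace ℝ (Fin n) → ℝ}
    {g x : _} (hf : HasGradientAt f g x) (hfx : f x ≠ 0) :
    HasGradientAt (fun y => Real.log (f y)) ((f x)⁻¹ • g) x := by
  have h := (Real.hasDerivAt_log hfx).comp_hasFDerivAt x hf.hasFDerivAt
  rw [hasGradientAt_iff_hasFDerivAt]
  refine h.congr_fderiv ?_
  ext v
  simp [InnerProductSpace.toDual_apply_apply, real_inner_smul_left]

end PriorScoreAux

open PriorScoreAux
open scoped RealInnerProductSpace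

/-- **Prior score via the diffusion score (Theorem 3.3).**
Let `X₀` have smooth strictly positive density `pX`, fix `ᾱ ∈ (0,1)`, and let
`X_t = √ᾱ·X₀ + √(1−ᾱ)·ε` with `ε ~ N(0, I)` independent of `X₀`, with marginal density
`pt`.  Assume the Bayes conditional density of `X₀` given `X_t = x_t` is the Gaussian
`N(x₀; E[X₀|X_t = x_t], r²·I)`.  Then, provided differentiation under the integral sign
is valid (hypothesis `hswap`), the prior score satisfies
`∇ log pX (x) = ((1−ᾱ)/(r²·√ᾱ)) · E_{x_t ~ N(√ᾱ·x, (1−ᾱ)·I)}[∇ log pt (x_t)]`. -/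
theorem prior_score_via_diffusion_score {n : ℕ} (pX : EuclideanSpace ℝ (Fin n) → ℝ)
    (hpos : ∀ x, 0 < pX x) (hsmooth : ContDiff ℝ (⊤ : ℕ∞) pX) (hint : ∫ x, pX x = 1)
    (ᾱ : ℝ) (hᾱ : ᾱ ∈ Set.Ioo (0 : ℝ) 1)
    (pt : EuclideanSpace ℝ (Fin n) → ℝ)
    (hpt : ∀ xt, pt xt = ∫ x₀, gaussPdf (Real.sqrt ᾱ • x₀) (1 - ᾱ) xt * pX x₀)
    (condDens : EuclideanSpace ℝ (Fin n) → EuclideanSpace ℝ (Fin n) → ℝ)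
    (hcond : ∀ x₀ xt,
      condDens x₀ xt = gaussPdf (Real.sqrt ᾱ • x₀) (1 - ᾱ) xt * pX x₀ / pt xt)
    (condMean : EuclideanSpace ℝ (Fin n) → EuclideanSpace ℝ (Fin n))
    (hmean : ∀ xt, condMean xt =
      (pt xt)⁻¹ • ∫ x₀, (gaussPdf (Real.sqrt ᾱ • x₀) (1 - ᾱ) xt * pX x₀) • x₀)
    (r : ℝ) (hr : 0 < r)
    (hgauss : ∀ xt x₀, condDens x₀ xt = gaussPdf (condMean xt) (r ^ 2) x₀)
    (x : EuclideanSpace ℝ (Fin n))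
    (hswap : gradient pX x = ∫ xt, pt xt • gradient (fun z => condDens z xt) x) :
    gradient (fun z => Real.log (pX z)) x =
      ((1 - ᾱ) / (r ^ 2 * Real.sqrt ᾱ)) •
        ∫ xt, gaussPdf (Real.sqrt ᾱ • x) (1 - ᾱ) xt •
          gradient (fun y => Real.log (pt y)) xt := by
  obtain ⟨hᾱ0, hᾱ1⟩ := hᾱ
  have hA : 0 < Real.sqrt ᾱ := Real.sqrt_pos.mpr hᾱ0
  have hv1 : 0 < 1 - ᾱ := by linarith
  have hr2 : 0 < r ^ 2 := by positivity
  obtain ⟨v1, hv1def⟩ : ∃ v1 : ℝ, v1 = 1 - ᾱ := ⟨_, rfl⟩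
  obtain ⟨A, hAdef⟩ : ∃ a : ℝ, a = Real.sqrt ᾱ := ⟨_, rfl⟩
  rw [← hv1def] at hv1
  rw [← hAdef] at hA
  rw [← hv1def, ← hAdef] at hcond hpt ⊢
  -- positivity of pt
  have pt_pos : ∀ xt, 0 < pt xt := by
    intro xt
    have h := (hcond 0 xt).symm.trans (hgauss xt 0)
    have hnum : 0 < gaussPdf (A • (0 : EuclideanSpace ℝ (Fin n))) v1 xt * pX 0 :=
      mul_pos (gaussPdf_pos hv1 _ _) (hpos 0)
    have hG : 0 < gaussPdf (condMean xt) (r^2) 0 := gaussPdf_pos hr2 _ _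
    rcases eq_or_ne (pt xt) 0 with h0 | h0
    · rw [h0, div_zero] at h; exact absurd h.symm hG.ne'
    · rw [div_eq_iff h0] at h
      nlinarith
  -- the key Bayes identity
  have key : ∀ x₀ xt, pt xt * gaussPdf (condMean xt) (r^2) x₀
      = gaussPdf (A • x₀) v1 xt * pX x₀ := by
    intro x₀ xt
    have h := (hcond x₀ xt).symm.trans (hgauss xt x₀)
    rw [div_eq_iff (pt_pos xt).ne'] at h
    rw [mul_comm]; exact h.symm
  have keylog : ∀ x₀ xt, Real.log (pt xt)
      + ((-(n:ℝ)/2) * Real.log (2*π*(r^2)) - ‖x₀ - condMean xt‖^2/(2*(r^2)))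
      = ((-(n:ℝ)/2) * Real.log (2*π*v1) - ‖xt - A • x₀‖^2/(2*v1))
        + Real.log (pX x₀) := by
    intro x₀ xt
    have h := congrArg Real.log (key x₀ xt)
    rw [Real.log_mul (pt_pos xt).ne' (gaussPdf_pos hr2 _ _).ne',
      Real.log_mul (gaussPdf_pos hv1 _ _).ne' (hpos x₀).ne',
      log_gaussPdf hr2, log_gaussPdf hv1] at h
    exact h
  -- the conditional mean is affine
  have claim : ∀ xt u : EuclideanSpace ℝ (Fin n),
      ⟪u, condMean xt⟫/(r^2) = ⟪u, condMean 0⟫/(r^2) + A * ⟪u, xt⟫/v1 := by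
    intro xt u
    have e1 := keylog u xt
    have e2 := keylog 0 xt
    have e3 := keylog u 0
    have e4 := keylog 0 0
    simp only [smul_zero, sub_zero, zero_sub, norm_neg, norm_zero, zero_pow, ne_eq,
      OfNat.ofNat_ne_zero, not_false_eq_true, zero_div, neg_zero] at e2 e3 e4
    rw [norm_sub_sq_real u (condMean xt), norm_sub_sq_real xt (A • u),
      real_inner_smul_right] at e1
    rw [norm_sub_sq_real u (condMean 0)] at e3
    linear_combination e1 - e2 - e3 + e4 - (A/v1) * real_inner_comm xt u
  set k : ℝ := r^2 * A/v1 with hk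
  have condMean_affine : ∀ xt, condMean xt = condMean 0 + k • xt := by
    intro xt
    have hw : ∀ u : EuclideanSpace ℝ (Fin n),
        ⟪u, v1 • condMean xt - (v1 • condMean 0 + (r^2*A) • xt)⟫ = 0 := by
      intro u
      have h := claim xt u
      have l1 : ⟪u, condMean xt⟫ / r^2 * (r^2*v1) = ⟪u, condMean xt⟫ * v1 := by
        field_simp
      have l2 : (⟪u, condMean 0⟫/r^2 + A*⟪u,xt⟫/v1) * (r^2*v1)
          = ⟪u, condMean 0⟫ * v1 + r^2*A*⟪u,xt⟫ := by
        field_simp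
      have H : ⟪u, condMean xt⟫ * v1 = ⟪u, condMean 0⟫ * v1 + r^2*A*⟪u,xt⟫ := by
        rw [← l1, h, l2]
      rw [inner_sub_right, inner_add_right, real_inner_smul_right, real_inner_smul_right,
        real_inner_smul_right]
      linear_combination H
    have h0 := hw (v1 • condMean xt - (v1 • condMean 0 + (r^2*A) • xt))
    have hEq := sub_eq_zero.mp (inner_self_eq_zero.mp h0)
    have h3 := congrArg (fun z : EuclideanSpace ℝ (Fin n) => v1⁻¹ • z) hEq
    simp only [smul_add, smul_smul] at h3
    rw [inv_mul_cancel₀ hv1.ne', one_smul, one_smul] at h3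
    rw [h3, hk]
    match_scalars <;> field_simp <;> try ring
  -- gradient of log pt
  have grad_log_pt : ∀ xt, HasGradientAt (fun y => Real.log (pt y))
      (((-(1/(2*v1))) * 2) • (xt - A • x)
        + ((1/(2*r^2)) * (2*k)) • (k • xt - (x - condMean 0))) xt := by
    intro xt
    have hfun : (fun y => Real.log (pt y)) = fun y =>
        (Real.log (pX x) + ((-(n:ℝ)/2) * Real.log (2*π*v1)
          - (-(n:ℝ)/2) * Real.log (2*π*(r^2))))
        + (-(1/(2*v1))) * ‖y - A • x‖^2
        + (1/(2*r^2)) * ‖k • y - (x - condMean 0)‖^2 := by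
      funext y
      have h := keylog x y
      have hmy : condMean y = condMean 0 + k • y := condMean_affine y
      have hnorm : ‖x - condMean y‖^2 = ‖k • y - (x - condMean 0)‖^2 := by
        rw [hmy, show x - (condMean 0 + k • y) = -(k • y - (x - condMean 0)) by abel, norm_neg]
      rw [hnorm] at h
      linear_combination h
    rw [hfun]
    exact hasGradientAt_comb _ _ _ k _ _ xt
  -- gradient of log pX
  have grad_log_pX : HasGradientAt (fun y => Real.log (pX y))
      (((-(1/(2*r^2))) * 2) • (x - condMean 0)
        + ((1/(2*v1)) * (2*A)) • (A • x - 0)) x := by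
    have hfun : (fun y => Real.log (pX y)) = fun y =>
        (Real.log (pt 0) + ((-(n:ℝ)/2) * Real.log (2*π*(r^2))
          - (-(n:ℝ)/2) * Real.log (2*π*v1)))
        + (-(1/(2*r^2))) * ‖y - condMean 0‖^2
        + (1/(2*v1)) * ‖A • y - 0‖^2 := by
      funext y
      have h := keylog y 0
      rw [norm_sub_rev (0 : EuclideanSpace ℝ (Fin n)) (A • y)] at h
      linear_combination -h
    rw [hfun]
    exact hasGradientAt_comb _ _ _ A _ _ x
  -- linear form of the score of pt
  set c1 : ℝ := k^2/r^2 - 1/v1 with hc1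
  set u0 : EuclideanSpace ℝ (Fin n) :=
    (1/v1) • (A • x) - (k/r^2) • (x - condMean 0) with hu0
  have hgradpt : ∀ xt, gradient (fun y => Real.log (pt y)) xt = c1 • xt + u0 := by
    intro xt
    rw [(grad_log_pt xt).gradient, hc1, hu0]
    match_scalars <;> field_simp <;> ring
  -- compute the integral
  have hI : (∫ xt, gaussPdf (A • x) v1 xt
      • gradient (fun y => Real.log (pt y)) xt) = c1 • (A • x) + u0 := by
    have hfun : (fun xt => gaussPdf (A • x) v1 xt
        • gradient (fun y => Real.log (pt y)) xt)
        = fun xt => c1 • (gaussPdf (A • x) v1 xt • xt)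
          + gaussPdf (A • x) v1 xt • u0 := by
      funext xt
      rw [hgradpt xt, smul_add, smul_smul, smul_smul, mul_comm]
    rw [hfun]
    have hI1 : Integrable (fun xt : EuclideanSpace ℝ (Fin n) =>
        c1 • (gaussPdf (A • x) v1 xt • xt)) := by
      exact (integrable_gaussPdf_smul hv1 (A • x)).smul c1
    rw [integral_add hI1 ((integrable_gaussPdf hv1 _).smul_const u0),
      integral_smul, integral_gaussPdf_smul hv1, integral_smul_const,
      integral_gaussPdf hv1, one_smul]
  rw [grad_log_pX.gradient, hI, hu0, hc1, hk]
  match_scalars <;> field_simp <;> ring
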